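/- Fix a positive integer n. If b is a finite Blaschke product of order at most n, then the operator norm of T_b on P satisfies ‖T_b‖ = 1; moreover, for every nonzero r ∈ P satisfying ‖T_b r‖ = ‖r‖, one has T_b r = b·r (the pointwise product, which in this case again lies in P). -/

import Mathlib

open Complex Real Set MeasureTheory Metric

noncomputable section

/-- The unit circle `𝕋 = {z ∈ ℂ : |z| = 1}`. -/
def unitCircleSet : Set ℂ := {z : ℂ | ‖z‖ = 1}

/-- An arc: a closed, connected, proper, nonempty subset of the unit circle. -/
def IsArc (A : Set ℂ) : Prop :=
  A ⊆ unitCircleSet ∧ IsClosed A ∧ IsConnected A ∧ A ≠ unitCircleSet ∧ A.Nonempty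

/-- `b` is a finite Blaschke product of order `n` (as a function on the closed unit disc):
`b(z) = λ ∏_{j} (z - a_j)/(1 - conj(a_j) z)` with `|λ| = 1` and `a_j ∈ 𝔻`. -/
def IsBlaschke (n : ℕ) (b : ℂ → ℂ) : Prop :=
  ∃ (lam : ℂ) (a : Fin n → ℂ), ‖lam‖ = 1 ∧ (∀ j, ‖a j‖ < 1) ∧
    ∀ z : ℂ, ‖z‖ ≤ 1 →
      b z = lam * ∏ j, (z - a j) / (1 - (starRingEnd ℂ) (a j) * z)

/-- The `k`-th Fourier coefficient `(1/2π) ∫_0^{2π} f(e^{it}) e^{-ikt} dt` of a function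
on the unit circle. -/
def fourierCoeffCircle (f : ℂ → ℂ) (k : ℤ) : ℂ :=
  (1 / (2 * π)) * ∫ t in (0:ℝ)..(2 * π),
    f (Complex.exp (t * Complex.I)) * Complex.exp (-((k : ℂ) * t) * Complex.I)

/-- The matrix of the Toeplitz operator `T_f : P → P`, `T_f ξ = π(f ξ)`, in the orthonormal
basis `{ζ^0, …, ζ^n}` of the space `P` of analytic polynomials of degree at most `n`:
its `(j,k)` entry is `⟨T_f ζ^k, ζ^j⟩ = f̂(j-k)`. -/
def toepMatrix (n : ℕ) (f : ℂ → ℂ) : Matrix (Fin (n+1)) (Fin (n+1)) ℂ :=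
  fun j k => fourierCoeffCircle f ((j : ℤ) - (k : ℤ))

/-- The operator norm of a matrix acting on the (finite-dimensional) Hilbert space
`EuclideanSpace ℂ (Fin m)`, which models the operator norm of `T_f` on `P`. -/
def matOpNorm {m : ℕ} (M : Matrix (Fin m) (Fin m) ℂ) : ℝ :=
  ‖LinearMap.toContinuousLinearMap (Matrix.toEuclideanLin M)‖

/-! Write `p_r(z) = ∑ rₖ zᵏ`. The coefficients of `T_b r` are the first `n + 1` Fourier
coefficients of `b · p_r`, so Bessel's identity and `|b| = 1` on the circle give
`(1/2π) ∫ |b p_r - p_{T_b r}|² = ‖b p_r‖² - ‖T_b r‖² = ‖r‖² - ‖T_b r‖²`.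
Hence `‖T_b‖ ≤ 1`, and if `‖T_b r‖ = ‖r‖` the continuous integrand vanishes, i.e.
`b p_r = p_{T_b r}` on the circle. The norm is attained at the coefficients of
`q = ∏ (1 - āⱼ z)`, since `b q = λ ∏ (z - aⱼ)` is a polynomial of degree `m ≤ n`. -/

open ComplexConjugate

lemma pow_mul_conj_pow_exp_mul_I (t : ℝ) (j k : ℕ) :
    exp (t * I) ^ j * conj (exp (t * I) ^ k) = exp (((j - k : ℤ) : ℂ) * t * I) := by
  rw [map_pow, ← exp_conj, map_mul, conj_ofReal, conj_I, ← Complex.exp_nat_mul,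
    ← Complex.exp_nat_mul, ← Complex.exp_add]
  push_cast
  ring_nf

lemma integral_exp_int_mul_mul_I (k : ℤ) :
    ∫ t in (0 : ℝ)..2 * π, exp (k * t * I) = if k = 0 then (2 * π : ℂ) else 0 := by
  split_ifs with hk
  · simp [hk]
  have hkI : (k : ℂ) * I ≠ 0 := mul_ne_zero (Int.cast_ne_zero.mpr hk) I_ne_zero
  simp_rw [mul_right_comm _ _ I]
  rw [integral_exp_mul_complex hkI, ofReal_zero, mul_zero, Complex.exp_zero,
    show (k : ℂ) * I * ↑(2 * π) = k * (2 * π * I) by push_cast; ring,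
    exp_int_mul_two_pi_mul_I, sub_self, zero_div]

lemma integral_exp_mul_I_pow_mul_conj_pow (j k : ℕ) :
    ∫ t in (0 : ℝ)..2 * π, exp (t * I) ^ j * conj (exp (t * I) ^ k) =
      if j = k then (2 * π : ℂ) else 0 := by
  simp_rw [pow_mul_conj_pow_exp_mul_I, integral_exp_int_mul_mul_I, sub_eq_zero, Nat.cast_inj]

def circlePoly {N : ℕ} (v : Fin N → ℂ) (z : ℂ) : ℂ := ∑ k, v k * z ^ (k : ℕ)

lemma continuous_circlePoly_exp_mul_I {N : ℕ} (v : Fin N → ℂ) :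
    Continuous fun t : ℝ => circlePoly v (exp (t * I)) := by
  unfold circlePoly; fun_prop

open Polynomial in
lemma circlePoly_coeff_eq_eval {n : ℕ} {p : ℂ[X]} (hp : p.natDegree ≤ n) (z : ℂ) :
    circlePoly (fun k : Fin (n + 1) => p.coeff k) z = p.eval z := by
  rw [eval_eq_sum_range' (Nat.lt_succ_of_le hp), ← Fin.sum_univ_eq_sum_range]
  rfl

lemma integral_mul_conj_circlePoly {N : ℕ} {g : ℝ → ℂ} (hg : Continuous g) (c : Fin N → ℂ) :
    ∫ t in (0 : ℝ)..2 * π, g t * conj (circlePoly c (exp (t * I))) =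
      ∑ j, conj (c j) * ∫ t in (0 : ℝ)..2 * π, g t * conj (exp (t * I) ^ (j : ℕ)) := by
  simp only [circlePoly, map_sum, map_mul, Finset.mul_sum]
  rw [intervalIntegral.integral_finsetSum fun j _ => by
    apply Continuous.intervalIntegrable; fun_prop]
  refine Finset.sum_congr rfl fun j _ => ?_
  rw [← intervalIntegral.integral_const_mul]
  congr 1; ext t; ring

lemma integral_circlePoly_mul_conj_pow {N : ℕ} (v : Fin N → ℂ) (j : Fin N) :
    ∫ t in (0 : ℝ)..2 * π, circlePoly v (exp (t * I)) * conj (exp (t * I) ^ (j : ℕ)) =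
      2 * π * v j := by
  simp only [circlePoly, Finset.sum_mul]
  rw [intervalIntegral.integral_finsetSum fun k _ => by
    apply Continuous.intervalIntegrable; fun_prop]
  simp_rw [mul_assoc, intervalIntegral.integral_const_mul, integral_exp_mul_I_pow_mul_conj_pow,
    Fin.val_inj, mul_ite, mul_zero, Finset.sum_ite_eq', Finset.mem_univ, if_true]
  ring

lemma integral_normSq_sub_circlePoly {N : ℕ} {g : ℝ → ℂ} (hg : Continuous g) (c : Fin N → ℂ)
    (hc : ∀ j : Fin N, ∫ t in (0 : ℝ)..2 * π, g t * conj (exp (t * I) ^ (j : ℕ)) = 2 * π * c j) :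
    ∫ t in (0 : ℝ)..2 * π, normSq (g t - circlePoly c (exp (t * I))) =
      (∫ t in (0 : ℝ)..2 * π, normSq (g t)) - 2 * π * ∑ j, normSq (c j) := by
  set S := fun t : ℝ => circlePoly c (exp (t * I))
  have hS : Continuous S := continuous_circlePoly_exp_mul_I c
  have hinner : ∀ h : ℝ → ℂ, Continuous h →
      (∀ j : Fin N, ∫ t in (0 : ℝ)..2 * π, h t * conj (exp (t * I) ^ (j : ℕ)) = 2 * π * c j) →
      ∫ t in (0 : ℝ)..2 * π, (h t * conj (S t)).re = 2 * π * ∑ j, normSq (c j) := by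
    intro h hh hhc
    have hre := reCLM.intervalIntegral_comp_comm (f := fun t => h t * conj (S t))
      ((by fun_prop : Continuous _).intervalIntegrable (μ := volume) 0 (2 * π))
    simp only [reCLM_apply] at hre
    rw [hre, integral_mul_conj_circlePoly hh]
    simp_rw [hhc, mul_left_comm _ (2 * π : ℂ), ← Finset.mul_sum, mul_comm (conj _), mul_conj]
    norm_cast
  have hnormSq : ∀ z : ℂ, normSq z = (z * conj z).re := fun z => by rw [mul_conj, ofReal_re]
  calc ∫ t in (0 : ℝ)..2 * π, normSq (g t - S t)
      = ∫ t in (0 : ℝ)..2 * π,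
          (normSq (g t) + (S t * conj (S t)).re - 2 * (g t * conj (S t)).re) := by
        simp_rw [normSq_sub, hnormSq (S _)]
    _ = (∫ t in (0 : ℝ)..2 * π, normSq (g t)) + (∫ t in (0 : ℝ)..2 * π, (S t * conj (S t)).re)
          - 2 * ∫ t in (0 : ℝ)..2 * π, (g t * conj (S t)).re := by
        rw [intervalIntegral.integral_sub, intervalIntegral.integral_add,
          intervalIntegral.integral_const_mul] <;>
        exact Continuous.intervalIntegrable (by fun_prop [continuous_normSq]) _ _
    _ = _ := by
        rw [hinner S hS (integral_circlePoly_mul_conj_pow c), hinner g hg hc]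
        ring

lemma EuclideanSpace.sum_normSq_eq_norm_sq {ι : Type*} [Fintype ι] (v : EuclideanSpace ℂ ι) :
    ∑ i, normSq (v i) = ‖v‖ ^ 2 := by
  simp only [EuclideanSpace.norm_sq_eq, normSq_eq_norm_sq]

lemma integral_normSq_circlePoly {N : ℕ} (v : EuclideanSpace ℂ (Fin N)) :
    ∫ t in (0 : ℝ)..2 * π, normSq (circlePoly v (exp (t * I))) = 2 * π * ‖v‖ ^ 2 := by
  have h := integral_normSq_sub_circlePoly (continuous_circlePoly_exp_mul_I v) v
    (integral_circlePoly_mul_conj_pow v)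
  simp only [sub_self, map_zero, intervalIntegral.integral_zero,
    EuclideanSpace.sum_normSq_eq_norm_sq] at h
  linarith

lemma exists_mem_Icc_exp_mul_I_eq {z : ℂ} (hz : ‖z‖ = 1) :
    ∃ t ∈ Icc 0 (2 * π), exp (t * I) = z := by
  refine ⟨toIcoMod two_pi_pos 0 (arg z), Ico_subset_Icc_self (toIcoMod_mem_Ico' _ _), ?_⟩
  rw [← self_sub_toIcoDiv_zsmul, ofReal_sub, ofReal_zsmul, ofReal_mul, ofReal_ofNat,
    exp_mul_I_periodic.sub_zsmul_eq]
  simpa [hz] using norm_mul_exp_arg_mul_I z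

lemma ContinuousLinearMap.opNorm_eq_one_of_norm_apply_le {𝕜 E F : Type*}
    [NontriviallyNormedField 𝕜] [SeminormedAddCommGroup E] [SeminormedAddCommGroup F]
    [NormedSpace 𝕜 E] [NormedSpace 𝕜 F] (f : E →L[𝕜] F) (hle : ∀ x, ‖f x‖ ≤ ‖x‖) {x : E}
    (hx : ‖x‖ ≠ 0) (hfx : ‖f x‖ = ‖x‖) : ‖f‖ = 1 :=
  f.opNorm_eq_of_bounds zero_le_one (by simpa using hle) fun N _ hN =>
    le_of_mul_le_mul_right (by simpa [hfx] using hN x) ((norm_nonneg x).lt_of_ne' hx)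

section Toeplitz

variable {n : ℕ} {b : ℂ → ℂ}

lemma integral_mul_circlePoly_mul_conj_pow
    (hb : Continuous fun t : ℝ => b (exp (t * I))) (r : EuclideanSpace ℂ (Fin (n + 1)))
    (j : Fin (n + 1)) :
    ∫ t in (0 : ℝ)..2 * π, b (exp (t * I)) * circlePoly r (exp (t * I)) *
        conj (exp (t * I) ^ (j : ℕ)) =
      2 * π * Matrix.toEuclideanLin (toepMatrix n b) r j := by
  have hcoeff : ∀ k : Fin (n + 1),
      ∫ t in (0 : ℝ)..2 * π,
        b (exp (t * I)) * (exp (t * I) ^ (k : ℕ) * conj (exp (t * I) ^ (j : ℕ))) =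
      2 * π * fourierCoeffCircle b (j - k) := by
    intro k
    rw [fourierCoeffCircle, ← mul_assoc, mul_one_div_cancel (by simp [pi_ne_zero]), one_mul]
    simp_rw [pow_mul_conj_pow_exp_mul_I]
    congr 1; ext t; congr 2; push_cast; ring
  calc _ = ∫ t in (0 : ℝ)..2 * π, ∑ k : Fin (n + 1),
          r k * (b (exp (t * I)) * (exp (t * I) ^ (k : ℕ) * conj (exp (t * I) ^ (j : ℕ)))) := by
        congr 1; ext t
        simp only [circlePoly, Finset.mul_sum, Finset.sum_mul]
        exact Finset.sum_congr rfl fun k _ => by ring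
    _ = 2 * π * ∑ k : Fin (n + 1), fourierCoeffCircle b (j - k) * r k := by
        rw [intervalIntegral.integral_finsetSum fun k _ => by
          exact (continuous_const.mul (hb.mul (by fun_prop))).intervalIntegrable _ _,
          Finset.mul_sum]
        simp_rw [intervalIntegral.integral_const_mul, hcoeff]
        exact Finset.sum_congr rfl fun k _ => by ring
    _ = 2 * π * Matrix.toEuclideanLin (toepMatrix n b) r j := rfl

lemma integral_normSq_mul_circlePoly_sub_toeplitz
    (hb : Continuous fun t : ℝ => b (exp (t * I))) (hb_norm : ∀ z, ‖z‖ = 1 → ‖b z‖ = 1)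
    (r : EuclideanSpace ℂ (Fin (n + 1))) :
    ∫ t in (0 : ℝ)..2 * π, normSq (b (exp (t * I)) * circlePoly r (exp (t * I)) -
        circlePoly (Matrix.toEuclideanLin (toepMatrix n b) r) (exp (t * I))) =
      2 * π * (‖r‖ ^ 2 - ‖Matrix.toEuclideanLin (toepMatrix n b) r‖ ^ 2) := by
  rw [integral_normSq_sub_circlePoly (g := fun t => b (exp (t * I)) * circlePoly r (exp (t * I)))
    (hb.mul (continuous_circlePoly_exp_mul_I r)) _ (integral_mul_circlePoly_mul_conj_pow hb r)]
  have hunimod : ∀ t : ℝ, normSq (b (exp (t * I))) = 1 := fun t => by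
    rw [normSq_eq_norm_sq, hb_norm _ (norm_exp_ofReal_mul_I t), one_pow]
  simp_rw [map_mul, hunimod, one_mul, integral_normSq_circlePoly,
    EuclideanSpace.sum_normSq_eq_norm_sq]
  ring

lemma norm_toeplitz_le
    (hb : Continuous fun t : ℝ => b (exp (t * I))) (hb_norm : ∀ z, ‖z‖ = 1 → ‖b z‖ = 1)
    (r : EuclideanSpace ℂ (Fin (n + 1))) :
    ‖Matrix.toEuclideanLin (toepMatrix n b) r‖ ≤ ‖r‖ := by
  have h := intervalIntegral.integral_nonneg (μ := volume) two_pi_pos.le fun t _ =>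
    normSq_nonneg (b (exp (t * I)) * circlePoly r (exp (t * I)) -
      circlePoly (Matrix.toEuclideanLin (toepMatrix n b) r) (exp (t * I)))
  rw [integral_normSq_mul_circlePoly_sub_toeplitz hb hb_norm r] at h
  have hsq := sub_nonneg.mp (nonneg_of_mul_nonneg_right h two_pi_pos)
  exact (pow_le_pow_iff_left₀ (norm_nonneg _) (norm_nonneg _) two_ne_zero).mp hsq

lemma mul_circlePoly_eq_toeplitz_of_norm_eq
    (hb : Continuous fun t : ℝ => b (exp (t * I))) (hb_norm : ∀ z, ‖z‖ = 1 → ‖b z‖ = 1)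
    {r : EuclideanSpace ℂ (Fin (n + 1))} (hr : ‖Matrix.toEuclideanLin (toepMatrix n b) r‖ = ‖r‖)
    {z : ℂ} (hz : ‖z‖ = 1) :
    b z * circlePoly r z = circlePoly (Matrix.toEuclideanLin (toepMatrix n b) r) z := by
  set F : ℝ → ℝ := fun t => normSq (b (exp (t * I)) * circlePoly r (exp (t * I)) -
    circlePoly (Matrix.toEuclideanLin (toepMatrix n b) r) (exp (t * I)))
  have hF : Continuous F := continuous_normSq.comp
    ((hb.mul (continuous_circlePoly_exp_mul_I _)).sub (continuous_circlePoly_exp_mul_I _))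
  have hF0 : ∫ t in (0 : ℝ)..2 * π, F t = 0 := by
    rw [integral_normSq_mul_circlePoly_sub_toeplitz hb hb_norm r, hr, sub_self, mul_zero]
  obtain ⟨t, ht, rfl⟩ := exists_mem_Icc_exp_mul_I_eq hz
  have hFt : F t = 0 := by
    by_contra hne
    exact hF0.not_gt (intervalIntegral.integral_pos two_pi_pos hF.continuousOn
      (fun s _ => normSq_nonneg _) ⟨t, ht, (normSq_nonneg _).lt_of_ne' hne⟩)
  exact sub_eq_zero.mp (normSq_eq_zero.mp hFt)

lemma toeplitz_eq_of_mul_eq_circlePoly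
    (hb : Continuous fun t : ℝ => b (exp (t * I))) {q p : EuclideanSpace ℂ (Fin (n + 1))}
    (hqp : ∀ z, ‖z‖ = 1 → b z * circlePoly q z = circlePoly p z) :
    Matrix.toEuclideanLin (toepMatrix n b) q = p := by
  ext j
  have h := integral_mul_circlePoly_mul_conj_pow hb q j
  simp_rw [hqp _ (norm_exp_ofReal_mul_I _), integral_circlePoly_mul_conj_pow] at h
  exact (mul_left_cancel₀ (by simp [pi_ne_zero]) h).symm

lemma norm_toeplitz_eq_of_mul_eq_circlePoly
    (hb : Continuous fun t : ℝ => b (exp (t * I))) (hb_norm : ∀ z, ‖z‖ = 1 → ‖b z‖ = 1)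
    {q p : EuclideanSpace ℂ (Fin (n + 1))}
    (hqp : ∀ z, ‖z‖ = 1 → b z * circlePoly q z = circlePoly p z) :
    ‖Matrix.toEuclideanLin (toepMatrix n b) q‖ = ‖q‖ := by
  have h := integral_normSq_mul_circlePoly_sub_toeplitz hb hb_norm q
  simp_rw [toeplitz_eq_of_mul_eq_circlePoly hb hqp, hqp _ (norm_exp_ofReal_mul_I _), sub_self,
    map_zero, intervalIntegral.integral_zero] at h
  have hsq := (sub_eq_zero.mp ((mul_eq_zero.mp h.symm).resolve_left two_pi_pos.ne')).symm
  rw [toeplitz_eq_of_mul_eq_circlePoly hb hqp]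
  exact (pow_left_inj₀ (norm_nonneg _) (norm_nonneg _) two_ne_zero).mp hsq

end Toeplitz

lemma one_sub_conj_mul_ne_zero {a z : ℂ} (ha : ‖a‖ < 1) (hz : ‖z‖ ≤ 1) : 1 - conj a * z ≠ 0 := by
  refine sub_ne_zero.mpr fun h => ?_
  have : ‖conj a * z‖ < 1 := by
    rw [norm_mul, norm_conj]
    exact (mul_le_of_le_one_right (norm_nonneg a) hz).trans_lt ha
  rw [← h, norm_one] at this
  exact this.false

lemma norm_div_one_sub_conj_mul_eq_one {a z : ℂ} (ha : ‖a‖ < 1) (hz : ‖z‖ = 1) :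
    ‖(z - a) / (1 - conj a * z)‖ = 1 := by
  have hden : 1 - conj a * z = z * conj (z - a) := by
    rw [map_sub, mul_sub, mul_conj, normSq_eq_norm_sq, hz]
    push_cast
    ring
  have hza : z - a ≠ 0 := sub_ne_zero.mpr fun h => by rw [h] at hz; exact ha.ne hz
  rw [hden, norm_div, norm_mul, hz, one_mul, norm_conj, div_self (norm_ne_zero_iff.mpr hza)]

namespace IsBlaschke

variable {m : ℕ} {b : ℂ → ℂ}

lemma norm_eq_one (hb : IsBlaschke m b) {z : ℂ} (hz : ‖z‖ = 1) : ‖b z‖ = 1 := by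
  obtain ⟨lam, a, hlam, ha, hb⟩ := hb
  rw [hb z hz.le, norm_mul, hlam, one_mul, norm_prod]
  exact Finset.prod_eq_one fun j _ => norm_div_one_sub_conj_mul_eq_one (ha j) hz

lemma continuousOn (hb : IsBlaschke m b) : ContinuousOn b (closedBall 0 1) := by
  obtain ⟨lam, a, -, ha, hb⟩ := hb
  refine ContinuousOn.congr ?_ fun z hz => hb z (mem_closedBall_zero_iff.mp hz)
  exact continuousOn_const.mul <| continuousOn_finsetProd _ fun j _ =>
    (continuousOn_id.sub continuousOn_const).div (by fun_prop)
      fun z hz => one_sub_conj_mul_ne_zero (ha j) (mem_closedBall_zero_iff.mp hz)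

lemma continuous_comp_exp_mul_I (hb : IsBlaschke m b) :
    Continuous fun t : ℝ => b (exp (t * I)) :=
  hb.continuousOn.comp_continuous (by fun_prop) fun t => by
    simp [norm_exp_ofReal_mul_I]

open Polynomial in
lemma exists_mul_eval_eq_eval (hb : IsBlaschke m b) :
    ∃ p q : ℂ[X], p.natDegree ≤ m ∧ q.natDegree ≤ m ∧ q.coeff 0 = 1 ∧
      ∀ z : ℂ, ‖z‖ ≤ 1 → b z * q.eval z = p.eval z := by
  obtain ⟨lam, a, -, ha, hb⟩ := hb
  refine ⟨C lam * ∏ j, (X - C (a j)), ∏ j, (1 - C (conj (a j)) * X), ?_, ?_, ?_, fun z hz => ?_⟩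
  · exact natDegree_C_mul_le _ _ |>.trans (by simp)
  · refine (natDegree_prod_le _ _).trans ?_
    refine (Finset.sum_le_card_nsmul _ _ 1 fun j _ => ?_).trans (by simp)
    compute_degree
  · simp [coeff_zero_eq_eval_zero, eval_prod]
  · simp only [eval_mul, eval_prod, eval_sub, eval_one, eval_C, eval_X, hb z hz,
      Finset.prod_div_distrib]
    rw [mul_assoc, div_mul_cancel₀ _ (Finset.prod_ne_zero_iff.mpr fun j _ =>
      one_sub_conj_mul_ne_zero (ha j) hz)]

end IsBlaschke

theorem toeplitz_blaschke_norm_one_general (n : ℕ) (b : ℂ → ℂ)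
    (m : ℕ) (hm : m ≤ n) (hb : IsBlaschke m b) :
    matOpNorm (toepMatrix n b) = 1 ∧
    ∀ r : EuclideanSpace ℂ (Fin (n+1)), r ≠ 0 →
      ‖Matrix.toEuclideanLin (toepMatrix n b) r‖ = ‖r‖ →
      ∀ z : ℂ, ‖z‖ = 1 →
        b z * ∑ k : Fin (n+1), r k * z ^ (k : ℕ) =
          ∑ k : Fin (n+1), (Matrix.toEuclideanLin (toepMatrix n b) r) k * z ^ (k : ℕ) := by
  have hcont := hb.continuous_comp_exp_mul_I
  have hnorm : ∀ z : ℂ, ‖z‖ = 1 → ‖b z‖ = 1 := fun z => hb.norm_eq_one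
  obtain ⟨p, q, hp, hq, hq0, hqp⟩ := hb.exists_mul_eval_eq_eval
  let coeffs (f : Polynomial ℂ) : EuclideanSpace ℂ (Fin (n + 1)) :=
    WithLp.toLp 2 fun k => f.coeff k
  have hq_ne : ‖coeffs q‖ ≠ 0 := by
    refine norm_ne_zero_iff.mpr fun h => ?_
    simpa [coeffs, hq0] using congrArg (fun v : EuclideanSpace ℂ (Fin (n + 1)) => v 0) h
  have hattain := norm_toeplitz_eq_of_mul_eq_circlePoly hcont hnorm (q := coeffs q)
    (p := coeffs p) fun z hz => by
      simp only [coeffs, circlePoly_coeff_eq_eval (hq.trans hm),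
        circlePoly_coeff_eq_eval (hp.trans hm)]
      exact hqp z hz.le
  refine ⟨?_, fun r _ hr z hz => mul_circlePoly_eq_toeplitz_of_norm_eq hcont hnorm hr hz⟩
  exact ContinuousLinearMap.opNorm_eq_one_of_norm_apply_le _ (norm_toeplitz_le hcont hnorm) hq_ne
    hattain

/-- For a Blaschke product `b` of order at most `n`, the Toeplitz operator `T_b` on the space
`P` of analytic polynomials of degree at most `n` has norm `1`, and every nonzero `r ∈ P`
with `‖T_b r‖ = ‖r‖` satisfies `T_b r = b·r` (as functions on the circle). -/
theorem toeplitz_blaschke_norm_one (n : ℕ) (hn : 1 ≤ n) (b : ℂ → ℂ)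
    (m : ℕ) (hm : m ≤ n) (hb : IsBlaschke m b) :
    matOpNorm (toepMatrix n b) = 1 ∧
    ∀ r : EuclideanSpace ℂ (Fin (n+1)), r ≠ 0 →
      ‖Matrix.toEuclideanLin (toepMatrix n b) r‖ = ‖r‖ →
      ∀ z : ℂ, ‖z‖ = 1 →
        b z * ∑ k : Fin (n+1), r k * z ^ (k : ℕ) =
          ∑ k : Fin (n+1), (Matrix.toEuclideanLin (toepMatrix n b) r) k * z ^ (k : ℕ) :=
  toeplitz_blaschke_norm_one_general n b m hm hb
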